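/- Let σ ∈ (0,2), Y > 0, Δx > 0, let K ≥ 1 be an integer with KΔx = Y, and set y_k = kΔx for 1 ≤ k ≤ K−1. Let v be a function of (x,y) defined at the grid points, let Δv(x_i,y_k) and ∂_y v(x_i,y_k) denote given real numbers (the exact Laplacian and y-derivative values), and suppose A_i^k and B_i^k are real numbers satisfying |A_i^k − Δv(x_i,y_k)| ≤ C₁ Δx^c and |B_i^k − ∂_y v(x_i,y_k)| ≤ C₂ Δx^d at all these grid points, for constants C₁, C₂ ≥ 0 and orders c, d > 0. Define L^{c,d}_i^k = y_k^{1−σ} A_i^k + (1−σ) y_k^{−σ} B_i^k and L_σ v(x_i,y_k) = y_k^{1−σ} Δv(x_i,y_k) + (1−σ) y_k^{−σ} ∂_y v(x_i,y_k). Then there exists a constant C ≥ 0, depending only on σ, C₁, C₂ and Y, such that: if σ ∈ (0,1], max over the grid points of |L^{c,d}_i^k − L_σ v(x_i,y_k)| ≤ C (Δx^c + Δx^{d−σ}); and if σ ∈ (1,2), max over the grid points of |L^{c,d}_i^k − L_σ v(x_i,y_k)| ≤ C (Δx^{c+1−σ} + Δx^{d−σ}). -/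
import Mathlib


/-- Consistency of the natural discretization
`L^{c,d} = y^{1-σ} Δ^c + (1-σ) y^{-σ} D_y^d` of the extension operator
`L_σ v = y^{1-σ} Δv + (1-σ) y^{-σ} ∂_y v` (Section 5.1): with approximations `A` of the
Laplacian of order `c` and `B` of `∂_y` of order `d` at the nodes `y_k = kΔx`,
`1 ≤ k ≤ K-1`, `KΔx = Y`, the discretization error is `O(Δx^c + Δx^{d-σ})` for
`σ ∈ (0,1]` and `O(Δx^{c+1-σ} + Δx^{d-σ})` for `σ ∈ (1,2)`, with a constant depending
only on `σ, C₁, C₂, Y`. -/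
theorem stmt18 (σ Y C₁ C₂ c d : ℝ) (hσ : σ ∈ Set.Ioo (0:ℝ) 2) (hY : 0 < Y)
    (hC₁ : 0 ≤ C₁) (hC₂ : 0 ≤ C₂) (hc : 0 < c) (hd : 0 < d) :
    ∃ C ≥ 0, ∀ (Δx : ℝ) (K : ℕ), 0 < Δx → 1 ≤ K → (K : ℝ) * Δx = Y →
      ∀ A B Dv Pv : ℕ → ℕ → ℝ,
      (∀ i k, 1 ≤ k → k ≤ K - 1 → |A i k - Dv i k| ≤ C₁ * Δx ^ c) →
      (∀ i k, 1 ≤ k → k ≤ K - 1 → |B i k - Pv i k| ≤ C₂ * Δx ^ d) →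
      (σ ≤ 1 →
        ∀ i k, 1 ≤ k → k ≤ K - 1 →
          |(((k : ℝ) * Δx) ^ (1 - σ) * A i k + (1 - σ) * ((k : ℝ) * Δx) ^ (-σ) * B i k)
            - (((k : ℝ) * Δx) ^ (1 - σ) * Dv i k
              + (1 - σ) * ((k : ℝ) * Δx) ^ (-σ) * Pv i k)|
          ≤ C * (Δx ^ c + Δx ^ (d - σ)))
      ∧ (1 < σ →
        ∀ i k, 1 ≤ k → k ≤ K - 1 →
          |(((k : ℝ) * Δx) ^ (1 - σ) * A i k + (1 - σ) * ((k : ℝ) * Δx) ^ (-σ) * B i k)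
            - (((k : ℝ) * Δx) ^ (1 - σ) * Dv i k
              + (1 - σ) * ((k : ℝ) * Δx) ^ (-σ) * Pv i k)|
          ≤ C * (Δx ^ (c + 1 - σ) + Δx ^ (d - σ))) := by
  obtain ⟨hσ0, hσ2⟩ := hσ
  refine ⟨(Y ^ (1 - σ) + 1) * C₁ + C₂, by positivity, ?_⟩
  intro Δx K hΔx hK hKY A B Dv Pv hA hB
  have key : ∀ i k, 1 ≤ k → k ≤ K - 1 →
      |(((k : ℝ) * Δx) ^ (1 - σ) * A i k + (1 - σ) * ((k : ℝ) * Δx) ^ (-σ) * B i k)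
        - (((k : ℝ) * Δx) ^ (1 - σ) * Dv i k
          + (1 - σ) * ((k : ℝ) * Δx) ^ (-σ) * Pv i k)|
      ≤ ((k : ℝ) * Δx) ^ (1 - σ) * (C₁ * Δx ^ c)
        + ((k : ℝ) * Δx) ^ (-σ) * (C₂ * Δx ^ d) := by
    intro i k hk1 hkK
    have hk : (1 : ℝ) ≤ (k : ℝ) := by exact_mod_cast hk1
    have hy : 0 < (k : ℝ) * Δx := by nlinarith
    have e1 := hA i k hk1 hkK
    have e2 := hB i k hk1 hkK
    have h1σ : |1 - σ| ≤ 1 := abs_le.2 ⟨by linarith, by linarith⟩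
    have hne : 0 ≤ ((k : ℝ) * Δx) ^ (1 - σ) := Real.rpow_nonneg hy.le _
    have hne2 : 0 ≤ ((k : ℝ) * Δx) ^ (-σ) := Real.rpow_nonneg hy.le _
    have habs1 : 0 ≤ |A i k - Dv i k| := abs_nonneg _
    have habs2 : 0 ≤ |B i k - Pv i k| := abs_nonneg _
    calc |(((k : ℝ) * Δx) ^ (1 - σ) * A i k + (1 - σ) * ((k : ℝ) * Δx) ^ (-σ) * B i k)
        - (((k : ℝ) * Δx) ^ (1 - σ) * Dv i k
          + (1 - σ) * ((k : ℝ) * Δx) ^ (-σ) * Pv i k)|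
        = |((k : ℝ) * Δx) ^ (1 - σ) * (A i k - Dv i k)
            + (1 - σ) * (((k : ℝ) * Δx) ^ (-σ) * (B i k - Pv i k))| := by
          congr 1; ring
      _ ≤ |((k : ℝ) * Δx) ^ (1 - σ) * (A i k - Dv i k)|
            + |(1 - σ) * (((k : ℝ) * Δx) ^ (-σ) * (B i k - Pv i k))| := abs_add_le _ _
      _ = ((k : ℝ) * Δx) ^ (1 - σ) * |A i k - Dv i k|
            + |1 - σ| * (((k : ℝ) * Δx) ^ (-σ) * |B i k - Pv i k|) := by
          rw [abs_mul, abs_mul, abs_mul, abs_of_nonneg hne, abs_of_nonneg hne2]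
      _ ≤ ((k : ℝ) * Δx) ^ (1 - σ) * (C₁ * Δx ^ c)
            + 1 * (((k : ℝ) * Δx) ^ (-σ) * (C₂ * Δx ^ d)) := by
          gcongr
      _ = ((k : ℝ) * Δx) ^ (1 - σ) * (C₁ * Δx ^ c)
            + ((k : ℝ) * Δx) ^ (-σ) * (C₂ * Δx ^ d) := by ring
  have hds : Δx ^ (d - σ) = Δx ^ d * Δx ^ (-σ) := by
    rw [← Real.rpow_add hΔx]; ring_nf
  have hcs : Δx ^ (c + 1 - σ) = Δx ^ c * Δx ^ (1 - σ) := by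
    rw [← Real.rpow_add hΔx]; ring_nf
  constructor
  · intro hσ1 i k hk1 hkK
    refine (key i k hk1 hkK).trans ?_
    have hk : (1 : ℝ) ≤ (k : ℝ) := by exact_mod_cast hk1
    have hkK' : (k : ℝ) ≤ (K : ℝ) := by exact_mod_cast Nat.le_of_lt_succ (by omega)
    have hy : 0 < (k : ℝ) * Δx := by nlinarith
    have hyY : (k : ℝ) * Δx ≤ Y := by
      rw [← hKY]; exact mul_le_mul_of_nonneg_right hkK' hΔx.le
    have hΔy : Δx ≤ (k : ℝ) * Δx := by nlinarith
    have b1 : ((k : ℝ) * Δx) ^ (1 - σ) ≤ Y ^ (1 - σ) :=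
      Real.rpow_le_rpow hy.le hyY (by linarith)
    have b2 : ((k : ℝ) * Δx) ^ (-σ) ≤ Δx ^ (-σ) :=
      Real.rpow_le_rpow_of_nonpos hΔx hΔy (by linarith)
    have p1 : 0 ≤ Δx ^ c := Real.rpow_nonneg hΔx.le _
    have p2 : 0 ≤ Δx ^ d := Real.rpow_nonneg hΔx.le _
    have p3 : 0 ≤ Δx ^ (-σ) := Real.rpow_nonneg hΔx.le _
    have p4 : 0 ≤ Y ^ (1 - σ) := Real.rpow_nonneg hY.le _
    have t1 : ((k : ℝ) * Δx) ^ (1 - σ) * (C₁ * Δx ^ c) ≤ Y ^ (1 - σ) * (C₁ * Δx ^ c) :=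
      mul_le_mul_of_nonneg_right b1 (by positivity)
    have t2 : ((k : ℝ) * Δx) ^ (-σ) * (C₂ * Δx ^ d) ≤ Δx ^ (-σ) * (C₂ * Δx ^ d) :=
      mul_le_mul_of_nonneg_right b2 (by positivity)
    rw [hds]
    nlinarith [mul_nonneg hC₁ p1, mul_nonneg hC₂ p1,
      mul_nonneg (mul_nonneg p4 hC₁) (mul_nonneg p2 p3), mul_nonneg hC₁ (mul_nonneg p2 p3)]
  · intro hσ1 i k hk1 hkK
    refine (key i k hk1 hkK).trans ?_
    have hk : (1 : ℝ) ≤ (k : ℝ) := by exact_mod_cast hk1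
    have hy : 0 < (k : ℝ) * Δx := by nlinarith
    have hΔy : Δx ≤ (k : ℝ) * Δx := by nlinarith
    have b1 : ((k : ℝ) * Δx) ^ (1 - σ) ≤ Δx ^ (1 - σ) :=
      Real.rpow_le_rpow_of_nonpos hΔx hΔy (by linarith)
    have b2 : ((k : ℝ) * Δx) ^ (-σ) ≤ Δx ^ (-σ) :=
      Real.rpow_le_rpow_of_nonpos hΔx hΔy (by linarith)
    have p1 : 0 ≤ Δx ^ c := Real.rpow_nonneg hΔx.le _
    have p2 : 0 ≤ Δx ^ d := Real.rpow_nonneg hΔx.le _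
    have p3 : 0 ≤ Δx ^ (-σ) := Real.rpow_nonneg hΔx.le _
    have p5 : 0 ≤ Δx ^ (1 - σ) := Real.rpow_nonneg hΔx.le _
    have p4 : 0 ≤ Y ^ (1 - σ) := Real.rpow_nonneg hY.le _
    have t1 : ((k : ℝ) * Δx) ^ (1 - σ) * (C₁ * Δx ^ c) ≤ Δx ^ (1 - σ) * (C₁ * Δx ^ c) :=
      mul_le_mul_of_nonneg_right b1 (by positivity)
    have t2 : ((k : ℝ) * Δx) ^ (-σ) * (C₂ * Δx ^ d) ≤ Δx ^ (-σ) * (C₂ * Δx ^ d) :=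
      mul_le_mul_of_nonneg_right b2 (by positivity)
    rw [hds, hcs]
    have q1 : 0 ≤ (Y ^ (1 - σ) * C₁ + C₂) * (Δx ^ c * Δx ^ (1 - σ)) :=
      mul_nonneg (by positivity) (mul_nonneg p1 p5)
    have q2 : 0 ≤ (Y ^ (1 - σ) * C₁ + C₁) * (Δx ^ d * Δx ^ (-σ)) :=
      mul_nonneg (by positivity) (mul_nonneg p2 p3)
    linarith [q1, q2, t1, t2]
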